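/- Let w, m be positive natural numbers, let 0 < δ < 1, and let E : F_2^w → F_2^m be a code such that any two distinct codewords E(u₁), E(u₂) (for u₁ ≠ u₂) agree in at most δ·m positions (equivalently, have Hamming distance at least (1−δ)·m). Define the quantum fingerprint states |f(u)⟩ = (1/√m) Σ_{l=1}^{m} (−1)^{E_l(u)} |l⟩ ∈ ℂ^m. Then for all u₁ ≠ u₂, the inner product satisfies ⟨f(u₁)|f(u₂)⟩ ≤ 2δ − 1, and in particular ⟨f(u₁)|f(u₂)⟩ ≤ δ. -/

import Mathlib

/-- The quantum fingerprint state `|f(u)⟩ = (1/√m) ∑_{l} (−1)^{E_l(u)} |l⟩` of a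
bit string `u ∈ F₂^w`, relative to an encoding `E : F₂^w → F₂^m`. -/
noncomputable def fingerprint (w m : ℕ)
    (E : (Fin w → ZMod 2) → (Fin m → ZMod 2)) (u : Fin w → ZMod 2) :
    EuclideanSpace ℂ (Fin m) :=
  WithLp.toLp 2 (fun l => ((1 / Real.sqrt m : ℝ) : ℂ) * (if E u l = 0 then 1 else -1))

/-!
The fingerprint states have real coordinates `±1/√m`, so their inner product is
`1/m` times the number of agreeing positions minus the number of disagreeing ones,
that is `(m - 2 d)/m` with `d` the Hamming distance of the codewords. A distance
`d ≥ (1 - δ) m` then gives `(m - 2 d)/m ≤ 2δ - 1 < δ`.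
-/

open Finset

theorem ZMod.two_sign_mul_sign {R : Type*} [Ring R] (a b : ZMod 2) :
    (if a = 0 then (1 : R) else -1) * (if b = 0 then 1 else -1) = if a = b then 1 else -1 := by
  obtain rfl | rfl : a = 0 ∨ a = 1 := by revert a; decide
  all_goals obtain rfl | rfl : b = 0 ∨ b = 1 := by revert b; decide
  all_goals norm_num

theorem sum_ite_one_neg_one_eq_card_sub_two_mul_hammingDist {ι β R : Type*} [Fintype ι]
    [DecidableEq β] [Ring R] (x y : ι → β) :
    ∑ i, (if x i = y i then (1 : R) else -1) = Fintype.card ι - 2 * hammingDist x y := by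
  have hsign : ∀ i,
      (if x i = y i then (1 : R) else -1) = 1 - 2 * if x i ≠ y i then 1 else 0 := by
    intro i
    by_cases h : x i = y i <;> simp [h]
    norm_num
  simp only [hsign, sum_sub_distrib, ← mul_sum, sum_boole, hammingDist]
  simp

theorem inner_fingerprint (w m : ℕ) (E : (Fin w → ZMod 2) → (Fin m → ZMod 2))
    (u₁ u₂ : Fin w → ZMod 2) :
    inner ℂ (fingerprint w m E u₁) (fingerprint w m E u₂) =
      (((m - 2 * hammingDist (E u₁) (E u₂) : ℝ) / m : ℝ) : ℂ) := by
  have hcoord : ∀ u l, fingerprint w m E u l =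
      ((1 / Real.sqrt m * if E u l = 0 then 1 else -1 : ℝ) : ℂ) := by
    intro u l
    simp only [fingerprint]
    split_ifs <;> simp
  simp only [PiLp.inner_apply, hcoord, RCLike.inner_apply, Complex.conj_ofReal,
    ← Complex.ofReal_mul, ← Complex.ofReal_sum]
  congr 1
  rw [sum_congr rfl fun i _ => mul_mul_mul_comm _ _ _ _]
  simp only [ZMod.two_sign_mul_sign, ← mul_sum,
    sum_ite_one_neg_one_eq_card_sub_two_mul_hammingDist, Fintype.card_fin,
    hammingDist_comm (E u₂)]
  rw [div_mul_div_comm, one_mul, Real.mul_self_sqrt (Nat.cast_nonneg m)]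
  ring

theorem fingerprint_inner_le_general (w m : ℕ) (hm : 0 < m) (δ : ℝ)
    (hδ1 : δ < 1)
    (E : (Fin w → ZMod 2) → (Fin m → ZMod 2))
    (hE : ∀ u₁ u₂ : Fin w → ZMod 2, u₁ ≠ u₂ →
      (1 - δ) * (m : ℝ) ≤ (hammingDist (E u₁) (E u₂) : ℝ)) :
    ∀ u₁ u₂ : Fin w → ZMod 2, u₁ ≠ u₂ →
      (inner ℂ (fingerprint w m E u₁) (fingerprint w m E u₂) : ℂ).im = 0 ∧
      (inner ℂ (fingerprint w m E u₁) (fingerprint w m E u₂) : ℂ).re ≤ 2 * δ - 1 ∧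
      (inner ℂ (fingerprint w m E u₁) (fingerprint w m E u₂) : ℂ).re ≤ δ := by
  intro u₁ u₂ hne
  have hbound : ((m : ℝ) - 2 * hammingDist (E u₁) (E u₂)) / m ≤ 2 * δ - 1 := by
    rw [div_le_iff₀ (by exact_mod_cast hm)]
    linarith [hE u₁ u₂ hne]
  rw [inner_fingerprint, Complex.ofReal_re, Complex.ofReal_im]
  exact ⟨rfl, hbound, by linarith⟩

/-- If the code `E` has minimum distance at least `(1−δ)·m` (i.e. any two distinct
codewords agree in at most `δ·m` positions), then the inner product of the
fingerprint states of distinct strings is at most `2δ − 1`, and in particular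
at most `δ`.  (The inner product is real, so we state the bound for its real
part and record that its imaginary part vanishes.) -/
theorem fingerprint_inner_le (w m : ℕ) (hw : 0 < w) (hm : 0 < m) (δ : ℝ)
    (hδ0 : 0 < δ) (hδ1 : δ < 1)
    (E : (Fin w → ZMod 2) → (Fin m → ZMod 2))
    (hE : ∀ u₁ u₂ : Fin w → ZMod 2, u₁ ≠ u₂ →
      (1 - δ) * (m : ℝ) ≤ (hammingDist (E u₁) (E u₂) : ℝ)) :
    ∀ u₁ u₂ : Fin w → ZMod 2, u₁ ≠ u₂ →
      (inner ℂ (fingerprint w m E u₁) (fingerprint w m E u₂) : ℂ).im = 0 ∧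
      (inner ℂ (fingerprint w m E u₁) (fingerprint w m E u₂) : ℂ).re ≤ 2 * δ - 1 ∧
      (inner ℂ (fingerprint w m E u₁) (fingerprint w m E u₂) : ℂ).re ≤ δ :=
  fingerprint_inner_le_general w m hm δ hδ1 E hE
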